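/- Assume ∫_{(0,1]} z^{α/d} λ(dz) < ∞ and ∫_{(1,∞)} z^{α/d} λ(dz) < ∞. Then τ̄(r) ∼ r^{-α/d} ∫_{(0,∞)} z^{α/d} λ(dz) as r → ∞, i.e. the ratio of the two sides tends to 1. -/

import Mathlib

/-!
Integrating out the time variable first, the `s`-slice of `{r < z s^{-d/α}}` is `(0, min(t, (z/r)^{α/d}))`,
so with `β = α/d`, `τ̄(r) = r^{-β} ∫ min(t r^β, z^β) λ(dz)`.
As `r → ∞` the truncation level `t r^β` tends to `∞`, and since `∫ z^β dλ` is finite, dominated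
convergence turns the integral into `∫ z^β dλ`.
-/

open MeasureTheory Set Filter Topology
open scoped ENNReal NNReal

/-- `tauBar d α t lam r = τ̄(r)`, where
`τ(B) = (Leb ⊗ λ)({(s,z) ∈ (0,t] × (0,∞) : z·s^{-d/α} ∈ B})` and `τ̄(r) = τ((r,∞))`. -/
noncomputable def tauBar (d : ℕ) (α t : ℝ) (lam : MeasureTheory.Measure ℝ) (r : ℝ) : ℝ≥0∞ :=
  ((MeasureTheory.volume.restrict (Set.Ioc (0:ℝ) t)).prod (lam.restrict (Set.Ioi (0:ℝ))))
    {p : ℝ × ℝ | r < p.2 * p.1 ^ (-((d : ℝ) / α))}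

lemma Real.volume_Ioc_inter_Iio (a b c : ℝ) :
    volume (Ioc a b ∩ Iio c) = ENNReal.ofReal (min b c - a) := by
  apply le_antisymm
  · calc volume (Ioc a b ∩ Iio c) ≤ volume (Ioc a (min b c)) :=
          measure_mono fun s ⟨⟨has, hsb⟩, hsc⟩ => ⟨has, le_min hsb hsc.le⟩
      _ = ENNReal.ofReal (min b c - a) := Real.volume_Ioc
  · calc ENNReal.ofReal (min b c - a) = volume (Ioo a (min b c)) := Real.volume_Ioo.symm
      _ ≤ volume (Ioc a b ∩ Iio c) :=
          measure_mono fun s ⟨has, hs⟩ =>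
            ⟨⟨has, (hs.trans_le (min_le_left b c)).le⟩, hs.trans_le (min_le_right b c)⟩

lemma lt_mul_rpow_neg_iff {γ r z s : ℝ} (hγ : 0 < γ) (hr : 0 < r) (hz : 0 < z) (hs : 0 < s) :
    r < z * s ^ (-γ) ↔ s < (z / r) ^ γ⁻¹ := by
  rw [Real.rpow_neg hs.le, ← div_eq_mul_inv, lt_div_iff₀ (Real.rpow_pos_of_pos hs γ), mul_comm,
    ← lt_div_iff₀ hr, Real.lt_rpow_inv_iff_of_pos hs.le (div_pos hz hr).le hγ]

lemma volume_restrict_Ioc_setOf_lt_mul_rpow_neg {γ r z : ℝ} (hγ : 0 < γ) (hr : 0 < r)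
    (hz : 0 < z) (t : ℝ) :
    volume.restrict (Ioc 0 t) {s : ℝ | r < z * s ^ (-γ)} =
      ENNReal.ofReal (min t ((z / r) ^ γ⁻¹)) := by
  have hslice : {s : ℝ | r < z * s ^ (-γ)} ∩ Ioc 0 t = Ioc 0 t ∩ Iio ((z / r) ^ γ⁻¹) := by
    ext s
    simp only [mem_inter_iff, mem_Iio]
    constructor
    · rintro ⟨hlt, hs⟩
      exact ⟨hs, (lt_mul_rpow_neg_iff hγ hr hz hs.1).1 hlt⟩
    · rintro ⟨hs, hlt⟩
      exact ⟨(lt_mul_rpow_neg_iff hγ hr hz hs.1).2 hlt, hs⟩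
  rw [Measure.restrict_apply' measurableSet_Ioc, hslice, Real.volume_Ioc_inter_Iio, sub_zero]

lemma min_div_rpow_eq_rpow_neg_mul {β r z : ℝ} (hr : 0 < r) (hz : 0 ≤ z) (t : ℝ) :
    min t ((z / r) ^ β) = r ^ (-β) * min (t * r ^ β) (z ^ β) := by
  rw [mul_min_of_nonneg _ _ (Real.rpow_nonneg hr.le _), mul_left_comm,
    ← Real.rpow_add hr, neg_add_cancel, Real.rpow_zero, mul_one,
    Real.div_rpow hz hr.le, Real.rpow_neg hr.le, div_eq_inv_mul]

lemma tauBar_eq {d : ℕ} {α : ℝ} (hd : (0 : ℝ) < d) (hα : 0 < α) (t : ℝ)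
    (lam : Measure ℝ) [SigmaFinite lam] {r : ℝ} (hr : 0 < r) :
    tauBar d α t lam r = ENNReal.ofReal (r ^ (-(α / d))) *
      ∫⁻ z in Ioi 0, min (ENNReal.ofReal (t * r ^ (α / d))) (ENNReal.ofReal (z ^ (α / d))) ∂lam := by
  have hS : MeasurableSet {p : ℝ × ℝ | r < p.2 * p.1 ^ (-((d : ℝ) / α))} :=
    measurableSet_lt measurable_const (by fun_prop)
  rw [tauBar, Measure.prod_apply_symm hS, ← lintegral_const_mul' _ _ ENNReal.ofReal_ne_top]
  refine setLIntegral_congr_fun measurableSet_Ioi fun z hz => ?_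
  change volume.restrict (Ioc 0 t) {s : ℝ | r < z * s ^ (-((d : ℝ) / α))} = _
  rw [volume_restrict_Ioc_setOf_lt_mul_rpow_neg (div_pos hd hα) hr hz, inv_div,
    min_div_rpow_eq_rpow_neg_mul hr hz.le, ENNReal.ofReal_mul (Real.rpow_nonneg hr.le _),
    ENNReal.ofReal_min]

lemma tendsto_lintegral_min_ofReal_atTop {X : Type*} [MeasurableSpace X] {μ : Measure X}
    {f : X → ℝ≥0∞} (hf : AEMeasurable f μ) (hfin : ∫⁻ x, f x ∂μ ≠ ∞) :
    Tendsto (fun c : ℝ => ∫⁻ x, min (ENNReal.ofReal c) (f x) ∂μ) atTop (𝓝 (∫⁻ x, f x ∂μ)) := by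
  refine tendsto_lintegral_filter_of_dominated_convergence' f
    (Eventually.of_forall fun c => aemeasurable_const.min hf)
    (Eventually.of_forall fun c => ae_of_all _ fun x => min_le_right _ _) hfin
    (ae_of_all _ fun x => ?_)
  simpa using ENNReal.tendsto_ofReal_atTop.min (tendsto_const_nhds (x := f x))

lemma setLIntegral_Ioi_ofReal_rpow_ne_zero {lam : Measure ℝ} (hlam : lam (Ioi 0) ≠ 0) (β : ℝ) :
    ∫⁻ z in Ioi 0, ENNReal.ofReal (z ^ β) ∂lam ≠ 0 := by
  refine (ne_of_gt ((setLIntegral_pos_iff (by fun_prop)).2 ?_))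
  refine (pos_iff_ne_zero.2 hlam).trans_le (measure_mono fun z hz => ⟨?_, hz⟩)
  simpa [Function.mem_support] using Real.rpow_pos_of_pos hz β

theorem stmt2_general (d : ℕ) (hd : 1 ≤ d) (α : ℝ) (hα : α ∈ Set.Ioo (0:ℝ) 2) (t : ℝ) (ht : 0 < t)
    (lam : MeasureTheory.Measure ℝ) [SigmaFinite lam]
    (hlam0 : lam (Set.Iic 0) = 0) (hlam_ne : lam ≠ 0)
    (hsmall : ∫⁻ z in Set.Ioc (0:ℝ) 1, ENNReal.ofReal (z ^ (α / (d:ℝ))) ∂lam ≠ ⊤)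
    (hbig : ∫⁻ z in Set.Ioi (1:ℝ), ENNReal.ofReal (z ^ (α / (d:ℝ))) ∂lam ≠ ⊤) :
    Filter.Tendsto
      (fun r : ℝ => (tauBar d α t lam r).toReal /
        (r ^ (-(α / (d:ℝ))) *
          (∫⁻ z in Set.Ioi (0:ℝ), ENNReal.ofReal (z ^ (α / (d:ℝ))) ∂lam).toReal))
      Filter.atTop (nhds 1) := by
  have hd0 : (0 : ℝ) < d := by exact_mod_cast hd
  set β := α / (d : ℝ)
  set M := ∫⁻ z in Ioi 0, ENNReal.ofReal (z ^ β) ∂lam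
  have hM_top : M ≠ ∞ := by
    simp only [M]
    rw [← Ioc_union_Ioi_eq_Ioi zero_le_one, lintegral_union measurableSet_Ioi
      (Ioc_disjoint_Ioi le_rfl)]
    exact ENNReal.add_ne_top.2 ⟨hsmall, hbig⟩
  have hlam_pos : lam (Ioi 0) ≠ 0 := fun h => hlam_ne <| Measure.measure_univ_eq_zero.1 <|
    nonpos_iff_eq_zero.1 <| by
      simpa [hlam0, h] using measure_union_le (μ := lam) (Iic (0 : ℝ)) (Ioi 0)
  have hM_real : M.toReal ≠ 0 :=
    ENNReal.toReal_ne_zero.2 ⟨setLIntegral_Ioi_ofReal_rpow_ne_zero hlam_pos β, hM_top⟩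
  have hlim : Tendsto (fun r : ℝ => ∫⁻ z in Ioi 0,
      min (ENNReal.ofReal (t * r ^ β)) (ENNReal.ofReal (z ^ β)) ∂lam) atTop (𝓝 M) :=
    (tendsto_lintegral_min_ofReal_atTop (by fun_prop) hM_top).comp
      ((tendsto_rpow_atTop (div_pos hα.1 hd0)).const_mul_atTop ht)
  have hratio := ((ENNReal.tendsto_toReal hM_top).comp hlim).div_const M.toReal
  rw [div_self hM_real] at hratio
  refine hratio.congr' ?_
  filter_upwards [eventually_gt_atTop 0] with r hr
  rw [Function.comp_apply, tauBar_eq hd0 hα.1 t lam hr, ENNReal.toReal_mul,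
    ENNReal.toReal_ofReal (Real.rpow_nonneg hr.le _),
    mul_div_mul_left _ _ (Real.rpow_pos_of_pos hr _).ne']

theorem stmt2 (d : ℕ) (hd : 1 ≤ d) (α : ℝ) (hα : α ∈ Set.Ioo (0:ℝ) 2) (t : ℝ) (ht : 0 < t)
    (lam : MeasureTheory.Measure ℝ) [SigmaFinite lam]
    (hlam0 : lam (Set.Iic 0) = 0) (hlam_ne : lam ≠ 0)
    (hmom : ∫⁻ z in Set.Ioi (0:ℝ), ENNReal.ofReal (min 1 (z ^ 2)) ∂lam ≠ ⊤)
    (hsmall : ∫⁻ z in Set.Ioc (0:ℝ) 1, ENNReal.ofReal (z ^ (α / (d:ℝ))) ∂lam ≠ ⊤)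
    (hbig : ∫⁻ z in Set.Ioi (1:ℝ), ENNReal.ofReal (z ^ (α / (d:ℝ))) ∂lam ≠ ⊤) :
    Filter.Tendsto
      (fun r : ℝ => (tauBar d α t lam r).toReal /
        (r ^ (-(α / (d:ℝ))) *
          (∫⁻ z in Set.Ioi (0:ℝ), ENNReal.ofReal (z ^ (α / (d:ℝ))) ∂lam).toReal))
      Filter.atTop (nhds 1) :=
  stmt2_general d hd α hα t ht lam hlam0 hlam_ne hsmall hbig
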